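/- arXiv:2402.00963 — 8 statements merged into one kernel-verified Lean document; each statement's English description precedes it below -/
import Mathlib

section
/- If an order ⊑ on a functor F is right-stable, then for every relation R ⊆ X × Y, Rel(F)(R) ∘ ⊑_X ⊆ ⊑_Y ∘ Rel(F)(R). -/
/-- Relation lifting of a functor `F`, defined via spans. -/
def relLift (F : Type → Type) (Fmap : ∀ {X Y : Type}, (X → Y) → F X → F Y)
    {X Y : Type} (R : X → Y → Prop) (u : F X) (v : F Y) : Prop :=
  ∃ w : F {p : X × Y // R p.1 p.2},
    Fmap (fun p => p.1.1) w = u ∧ Fmap (fun p => p.1.2) w = v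

theorem rightStable_exchange
    (F : Type → Type) (Fmap : ∀ {X Y : Type}, (X → Y) → F X → F Y)
    (ord : ∀ X : Type, F X → F X → Prop)
    -- ⊑ is functorial
    (hmono : ∀ (X Y : Type) (f : X → Y) (u v : F X),
        ord X u v → ord Y (Fmap f u) (Fmap f v))
    -- ⊑ is right-stable
    (hrs : ∀ (X Y : Type) (f : X → Y) (u : F Y) (v : F X),
        ord Y u (Fmap f v) → ∃ w : F X, Fmap f w = u ∧ ord X w v)
    (X Y : Type) (R : X → Y → Prop) (u : F X) (v : F Y) :
    -- Rel(F)(R) ∘ ⊑_X ⊆ ⊑_Y ∘ Rel(F)(R)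
    (∃ u' : F X, ord X u u' ∧ relLift F @Fmap R u' v) →
      ∃ v' : F Y, relLift F @Fmap R u v' ∧ ord Y v' v := by
  rintro ⟨u', hord, w, hw1, hw2⟩
  obtain ⟨w', hw'1, hw'ord⟩ :=
    hrs _ X (fun p => p.1.1) u w (by rw [hw1]; exact hord)
  exact ⟨Fmap (fun p => p.1.2) w', ⟨w', hw'1, rfl⟩,
    hw2 ▸ hmono _ Y (fun p => p.1.2) w' w hw'ord⟩
end

section
/- If a right-stable order satisfies Rel(F)(R) ∘ ⊑_X ⊆ ⊑_Y ∘ Rel(F)(R) for all relations R, then the lax relation lifting satisfies ⊑_Y ∘ Rel(F)(R) ∘ ⊑_X = ⊑_Y ∘ Rel(F)(R); i.e., coalgebraic simulations for a right-stable order admit the asymmetric one-sided characterization. -/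
theorem asymmetric_characterization
    (F : Type → Type) (Fmap : ∀ {X Y : Type}, (X → Y) → F X → F Y)
    (ord : ∀ X : Type, F X → F X → Prop)
    -- ⊑ is a preorder on each FX
    (hrefl : ∀ (X : Type) (u : F X), ord X u u)
    (htrans : ∀ (X : Type) (u v w : F X), ord X u v → ord X v w → ord X u w)
    -- the exchange inclusion Rel(F)(R) ∘ ⊑_X ⊆ ⊑_Y ∘ Rel(F)(R), for all R
    (hexch : ∀ (X Y : Type) (R : X → Y → Prop) (u : F X) (v : F Y),
        (∃ u' : F X, ord X u u' ∧ relLift F @Fmap R u' v) →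
          ∃ v' : F Y, relLift F @Fmap R u v' ∧ ord Y v' v)
    (X Y : Type) (R : X → Y → Prop) (u : F X) (v : F Y) :
    -- ⊑_Y ∘ Rel(F)(R) ∘ ⊑_X = ⊑_Y ∘ Rel(F)(R)
    (∃ (a : F X) (b : F Y), ord X u a ∧ relLift F @Fmap R a b ∧ ord Y b v)
      ↔ (∃ b : F Y, relLift F @Fmap R u b ∧ ord Y b v) := by
  constructor
  · rintro ⟨a, b, hua, hab, hbv⟩
    obtain ⟨b', hlift, hb'⟩ := hexch X Y R u b ⟨a, hua, hab⟩
    exact ⟨b', hlift, htrans Y b' b v hb' hbv⟩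
  · rintro ⟨b, hub, hbv⟩
    exact ⟨u, b, hrefl X u, hub, hbv⟩
end

section
/- A relation R ⊆ X × Y is a coalgebraic simulation for the covariant-contravariant order on P^Act if and only if it is an (Act^r, Act^l)-simulation in the classical sense. -/
/-- Relation lifting of the powerset functor. -/
def relP {X Y : Type} (R : X → Y → Prop) (A : Set X) (B : Set Y) : Prop :=
  (∀ p ∈ A, ∃ q ∈ B, R p q) ∧ (∀ q ∈ B, ∃ p ∈ A, R p q)

theorem covariant_contravariant_simulation
    (Act X Y : Type) (Actr Actl Actbi : Set Act)
    -- {Act^r, Act^l, Act^bi} is a partition of Act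
    (hrl : Actr ∩ Actl = ∅) (hrb : Actr ∩ Actbi = ∅) (hlb : Actl ∩ Actbi = ∅)
    (hcover : Actr ∪ Actl ∪ Actbi = Set.univ)
    (c : X → Act → Set X) (d : Y → Act → Set Y) (R : X → Y → Prop) :
    -- R is a coalgebraic simulation for the covariant-contravariant order on P^Act
    (∀ x y, R x y → ∃ (u : Act → Set X) (v : Act → Set Y),
        ((∀ a ∈ Actr ∪ Actbi, c x a ⊆ u a) ∧ (∀ a ∈ Actl ∪ Actbi, u a ⊆ c x a)) ∧
        (∀ a, relP R (u a) (v a)) ∧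
        ((∀ a ∈ Actr ∪ Actbi, v a ⊆ d y a) ∧ (∀ a ∈ Actl ∪ Actbi, d y a ⊆ v a)))
      ↔
    -- R is a classical (Act^r, Act^l)-simulation
    (∀ x y, R x y →
        (∀ a ∈ Actr ∪ Actbi, ∀ x' ∈ c x a, ∃ y' ∈ d y a, R x' y') ∧
        (∀ a ∈ Actl ∪ Actbi, ∀ y' ∈ d y a, ∃ x' ∈ c x a, R x' y')) := by
  classical
  constructor
  · intro h x y hR
    obtain ⟨u, v, ⟨hu1, hu2⟩, hrel, hv1, hv2⟩ := h x y hR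
    constructor
    · intro a ha x' hx'
      obtain ⟨q, hq, hq'⟩ := (hrel a).1 x' (hu1 a ha hx')
      exact ⟨q, hv1 a ha hq, hq'⟩
    · intro a ha y' hy'
      obtain ⟨p, hp, hp'⟩ := (hrel a).2 y' (hv2 a ha hy')
      exact ⟨p, hu2 a ha hp, hp'⟩
  · intro h x y hR
    obtain ⟨h1, h2⟩ := h x y hR
    refine ⟨fun a => if a ∈ Actl ∧ a ∉ Actbi then {x' ∈ c x a | ∃ y' ∈ d y a, R x' y'} else c x a,
      fun a => if a ∈ Actr ∧ a ∉ Actbi then {y' ∈ d y a | ∃ x' ∈ c x a, R x' y'} else d y a,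
      ⟨?_, ?_⟩, ?_, ?_, ?_⟩
    · intro a ha
      dsimp only
      rw [if_neg]
      rintro ⟨hl, hnb⟩
      rcases ha with ha | ha
      · exact Set.eq_empty_iff_forall_notMem.mp hrl a ⟨ha, hl⟩
      · exact hnb ha
    · intro a _
      dsimp only
      split
      · exact fun x' hx' => hx'.1
      · exact fun x' hx' => hx'
    · intro a
      dsimp only
      have hmem : a ∈ Actr ∪ Actl ∪ Actbi := hcover ▸ Set.mem_univ a
      by_cases hb : a ∈ Actbi
      · rw [if_neg (fun h => h.2 hb), if_neg (fun h => h.2 hb)]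
        exact ⟨h1 a (Or.inr hb), h2 a (Or.inr hb)⟩
      · rcases hmem with (hr | hl) | hb'
        · rw [if_neg (fun h' => Set.eq_empty_iff_forall_notMem.mp hrl a ⟨hr, h'.1⟩),
            if_pos ⟨hr, hb⟩]
          constructor
          · intro p hp
            obtain ⟨q, hq, hq'⟩ := h1 a (Or.inl hr) p hp
            exact ⟨q, ⟨hq, p, hp, hq'⟩, hq'⟩
          · rintro q ⟨hq, p, hp, hpq⟩
            exact ⟨p, hp, hpq⟩
        · rw [if_pos ⟨hl, hb⟩,
            if_neg (fun h' => Set.eq_empty_iff_forall_notMem.mp hrl a ⟨h'.1, hl⟩)]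
          constructor
          · rintro p ⟨hp, q, hq, hpq⟩
            exact ⟨q, hq, hpq⟩
          · intro q hq
            obtain ⟨p, hp, hpq⟩ := h2 a (Or.inl hl) q hq
            exact ⟨p, ⟨hp, q, hq, hpq⟩, hpq⟩
        · exact absurd hb' hb
    · intro a _
      dsimp only
      split
      · exact fun y' hy' => hy'.1
      · exact fun y' hy' => hy'
    · intro a ha
      dsimp only
      rw [if_neg]
      rintro ⟨hr, hnb⟩
      rcases ha with ha | ha
      · exact Set.eq_empty_iff_forall_notMem.mp hrl a ⟨hr, ha⟩
      · exact hnb ha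
end

section
/- A relation R ⊆ X × Y is a coalgebraic simulation for the conformance order on P^A if and only if it is a conformance simulation: whenever (p,q) ∈ R, (1) for all a, if c(p)(a) ≠ ∅ then d(q)(a) ≠ ∅, and (2) for all a with c(p)(a) ≠ ∅ and all q' ∈ d(q)(a), there exists p' ∈ c(p)(a) with (p',q') ∈ R. -/
/-- The conformance order on `P^A`. -/
def confOrdA {A X : Type} (u v : A → Set X) : Prop :=
  ∀ a, u a = ∅ ∨ (v a ⊆ u a ∧ v a ≠ ∅)

theorem conformance_simulation
    (A X Y : Type) (c : X → A → Set X) (d : Y → A → Set Y) (R : X → Y → Prop) :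
    -- R is a coalgebraic simulation for the conformance order on P^A
    (∀ p q, R p q → ∃ (u : A → Set X) (v : A → Set Y),
        confOrdA (c p) u ∧ (∀ a, relP R (u a) (v a)) ∧ confOrdA v (d q))
      ↔
    -- R is a conformance simulation
    (∀ p q, R p q →
        (∀ a, c p a ≠ ∅ → d q a ≠ ∅) ∧
        (∀ a, c p a ≠ ∅ → ∀ q' ∈ d q a, ∃ p' ∈ c p a, R p' q')) := by
  constructor
  · intro h p q hpq
    obtain ⟨u, v, h1, h2, h3⟩ := h p q hpq
    have key : ∀ a, c p a ≠ ∅ →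
        u a ⊆ c p a ∧ u a ≠ ∅ ∧ d q a ⊆ v a ∧ d q a ≠ ∅ := by
      intro a hca
      rcases h1 a with h | ⟨hsub, hne⟩
      · exact absurd h hca
      have hva : v a ≠ ∅ := by
        rcases Set.nonempty_iff_ne_empty.mpr hne with ⟨x, hx⟩
        obtain ⟨y, hy, _⟩ := (h2 a).1 x hx
        exact Set.nonempty_iff_ne_empty.mp ⟨y, hy⟩
      rcases h3 a with h | ⟨hsub', hne'⟩
      · exact absurd h hva
      exact ⟨hsub, hne, hsub', hne'⟩
    constructor
    · intro a hca
      exact (key a hca).2.2.2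
    · intro a hca q' hq'
      obtain ⟨hsub, _, hsub', _⟩ := key a hca
      obtain ⟨p', hp', hr⟩ := (h2 a).2 q' (hsub' hq')
      exact ⟨p', hsub hp', hr⟩
  · intro h p q hpq
    classical
    obtain ⟨h1, h2⟩ := h p q hpq
    refine ⟨fun a => {p' ∈ c p a | ∃ q' ∈ d q a, R p' q'},
        fun a => if c p a = ∅ then ∅ else d q a, ?_, ?_, ?_⟩
    · intro a
      by_cases hca : c p a = ∅
      · exact Or.inl hca
      · refine Or.inr ⟨fun x hx => hx.1, ?_⟩
        obtain ⟨q', hq'⟩ := Set.nonempty_iff_ne_empty.mpr (h1 a hca)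
        obtain ⟨p', hp', hr⟩ := h2 a hca q' hq'
        exact Set.nonempty_iff_ne_empty.mp ⟨p', hp', q', hq', hr⟩
    · intro a
      dsimp only
      by_cases hca : c p a = ∅
      · rw [if_pos hca]
        constructor
        · intro x hx; exact absurd hx.1 (by simp [hca])
        · intro y hy; exact absurd hy (Set.notMem_empty y)
      · rw [if_neg hca]
        constructor
        · rintro x ⟨_, q', hq', hr⟩; exact ⟨q', hq', hr⟩
        · intro q' hq'
          obtain ⟨p', hp', hr⟩ := h2 a hca q' hq'
          exact ⟨p', ⟨hp', q', hq', hr⟩, hr⟩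
    · intro a
      dsimp only
      by_cases hca : c p a = ∅
      · exact Or.inl (by rw [if_pos hca])
      · rw [if_neg hca]
        exact Or.inr ⟨subset_rfl, h1 a hca⟩
end

section
/- If ⊑ = ∏_{a∈A} ⊑^a is an action-distributive order on F^A and each ⊑^a is a stable order on F, then ⊑ is stable on F^A. -/
/-- Lax relation lifting `Rel_⊑(F)(R) = ⊑_Y ∘ Rel(F)(R) ∘ ⊑_X`. -/
def laxLift (F : Type → Type) (Fmap : ∀ {X Y : Type}, (X → Y) → F X → F Y)
    (ord : ∀ X : Type, F X → F X → Prop)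
    {X Y : Type} (R : X → Y → Prop) (u : F X) (v : F Y) : Prop :=
  ∃ (a : F X) (b : F Y), ord X u a ∧ relLift F @Fmap R a b ∧ ord Y b v

/-- Stability of an order on a functor. -/
def Stable (F : Type → Type) (Fmap : ∀ {X Y : Type}, (X → Y) → F X → F Y)
    (ord : ∀ X : Type, F X → F X → Prop) : Prop :=
  ∀ (X Y Z W : Type) (f : X → Z) (g : Y → W) (R : Z → W → Prop) (u : F X) (v : F Y),
    laxLift F @Fmap ord (fun x y => R (f x) (g y)) u v ↔
      laxLift F @Fmap ord R (Fmap f u) (Fmap g v)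

/-- Lax relation lifting for the functor `F^A` with an action-distributive order
`⊑ = ∏_{a ∈ A} ⊑^a`, using `Rel(F^A)(R)(u,v) iff ∀ a, Rel(F)(R)(u a, v a)`. -/
def laxLiftA (F : Type → Type) (Fmap : ∀ {X Y : Type}, (X → Y) → F X → F Y)
    (A : Type) (ordA : A → ∀ X : Type, F X → F X → Prop)
    {X Y : Type} (R : X → Y → Prop) (u : A → F X) (v : A → F Y) : Prop :=
  ∃ (x : A → F X) (y : A → F Y),
    (∀ a, ordA a X (u a) (x a)) ∧
    (∀ a, relLift F @Fmap R (x a) (y a)) ∧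
    (∀ a, ordA a Y (y a) (v a))

lemma laxLiftA_iff_forall (F : Type → Type) (Fmap : ∀ {X Y : Type}, (X → Y) → F X → F Y)
    (A : Type) (ordA : A → ∀ X : Type, F X → F X → Prop)
    {X Y : Type} (R : X → Y → Prop) (u : A → F X) (v : A → F Y) :
    laxLiftA F @Fmap A ordA R u v ↔ ∀ a, laxLift F @Fmap (ordA a) R (u a) (v a) := by
  constructor
  · rintro ⟨x, y, h1, h2, h3⟩ a
    exact ⟨x a, y a, h1 a, h2 a, h3 a⟩
  · intro h
    choose x y h1 h2 h3 using h
    exact ⟨x, y, h1, h2, h3⟩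

theorem distributive_stable
    (F : Type → Type) (Fmap : ∀ {X Y : Type}, (X → Y) → F X → F Y)
    (A : Type) (ordA : A → ∀ X : Type, F X → F X → Prop)
    (hstable : ∀ a, Stable F @Fmap (ordA a)) :
    ∀ (X Y Z W : Type) (f : X → Z) (g : Y → W) (R : Z → W → Prop)
      (u : A → F X) (v : A → F Y),
      laxLiftA F @Fmap A ordA (fun x y => R (f x) (g y)) u v ↔
        laxLiftA F @Fmap A ordA R (fun a => Fmap f (u a)) (fun a => Fmap g (v a)) := by
  intro X Y Z W f g R u v
  simp only [laxLiftA_iff_forall]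
  exact forall_congr' fun a => hstable a X Y Z W f g R (u a) (v a)
end

section
/- If ⊑^r is right-stable and ⊑^l is left-stable on F and they commute, then the lax lifting for ⊑ = ⊑^r ∘ ⊑^l admits the asymmetric characterization Rel_⊑(F)(R) = ⊑^r_Y ∘ Rel(F)(R) ∘ ⊑^l_X, assuming ⊑^r and ⊑^l are reflexive. -/
theorem asymmetric_characterization_comp
    (F : Type → Type) (Fmap : ∀ {X Y : Type}, (X → Y) → F X → F Y)
    (ordr ordl : ∀ X : Type, F X → F X → Prop)
    -- ⊑^r and ⊑^l are functorial preorders on F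
    (hreflr : ∀ (X : Type) (u : F X), ordr X u u)
    (htransr : ∀ (X : Type) (u v w : F X), ordr X u v → ordr X v w → ordr X u w)
    (hmonor : ∀ (X Y : Type) (f : X → Y) (u v : F X),
        ordr X u v → ordr Y (Fmap f u) (Fmap f v))
    (hrefll : ∀ (X : Type) (u : F X), ordl X u u)
    (htransl : ∀ (X : Type) (u v w : F X), ordl X u v → ordl X v w → ordl X u w)
    (hmonol : ∀ (X Y : Type) (f : X → Y) (u v : F X),
        ordl X u v → ordl Y (Fmap f u) (Fmap f v))
    -- ⊑^r is right-stable
    (hrs : ∀ (X Y : Type) (f : X → Y) (u : F Y) (v : F X),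
        ordr Y u (Fmap f v) → ∃ w : F X, Fmap f w = u ∧ ordr X w v)
    -- ⊑^l is left-stable
    (hls : ∀ (X Y : Type) (f : X → Y) (u : F X) (v : F Y),
        ordl Y (Fmap f u) v → ∃ w : F X, Fmap f w = v ∧ ordl X u w)
    -- ⊑^r and ⊑^l commute
    (hcomm : ∀ (X : Type) (u v : F X),
        (∃ w, ordl X u w ∧ ordr X w v) ↔ (∃ w, ordr X u w ∧ ordl X w v))
    (X Y : Type) (R : X → Y → Prop) (u : F X) (v : F Y) :
    -- Rel_⊑(F)(R) = ⊑^r_Y ∘ Rel(F)(R) ∘ ⊑^l_X, for ⊑ = ⊑^r ∘ ⊑^l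
    (∃ (a : F X) (b : F Y),
        (∃ w, ordl X u w ∧ ordr X w a) ∧
        relLift F @Fmap R a b ∧
        (∃ w, ordl Y b w ∧ ordr Y w v)) ↔
      (∃ (a : F X) (b : F Y),
        ordl X u a ∧ relLift F @Fmap R a b ∧ ordr Y b v) := by
  constructor
  · rintro ⟨a, b, ⟨t, hut, hta⟩, ⟨w, hw1, hw2⟩, s, hbs, hsv⟩
    -- right-stability: pull ordr t ≤ a = Fmap π1 w back
    subst hw1 hw2
    obtain ⟨w', hw'1, hw'r⟩ := hrs _ _ _ t w hta
    -- b' := Fmap π2 w', ordr b' b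
    have hb' : ordr Y (Fmap (fun p => p.1.2) w') (Fmap (fun p => p.1.2) w) :=
      hmonor _ _ _ _ _ hw'r
    -- commute at Y: b' ⊑r b ⊑l s  ⟹  b' ⊑l s' ⊑r s
    obtain ⟨s', hls', hrs'⟩ := (hcomm Y (Fmap (fun p => p.1.2) w') s).mpr
      ⟨Fmap (fun p => p.1.2) w, hb', hbs⟩
    -- left-stability: push ordl (Fmap π2 w') s'
    obtain ⟨w'', hw''2, hw''l⟩ := hls _ _ _ w' s' hls'
    refine ⟨Fmap (fun p => p.1.1) w'', s', ?_, ⟨w'', rfl, hw''2⟩, htransr _ _ _ _ hrs' hsv⟩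
    exact htransl _ _ _ _ hut (by rw [← hw'1]; exact hmonol _ _ _ _ _ hw''l)
  · rintro ⟨a, b, hua, hab, hbv⟩
    exact ⟨a, b, ⟨a, hua, hreflr _ a⟩, hab, ⟨b, hrefll _ b, hbv⟩⟩
end

section
/- The two conformance component relations on the powerset P(X) commute: ⊑^{C∅} ∘ ⊑^{C¬∅} = ⊑^{C¬∅} ∘ ⊑^{C∅}, and their composition equals ⊑^C; consequently ⊑^C is transitive. -/
/-- `x₁ ⊑^{C∅} x₂` iff `x₁ = ∅` or `x₁ = x₂`. -/
def confE {X : Type} (u v : Set X) : Prop := u = ∅ ∨ u = v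

/-- `x₁ ⊑^{C¬∅} x₂` iff (`x₂ ⊆ x₁` and `x₂ ≠ ∅`) or `x₁ = x₂`. -/
def confNE {X : Type} (u v : Set X) : Prop := (v ⊆ u ∧ v ≠ ∅) ∨ u = v

/-- `x₁ ⊑^C x₂` iff `x₁ ⊑^{C∅} x₂` or `x₁ ⊑^{C¬∅} x₂`. -/
def confC {X : Type} (u v : Set X) : Prop := confE u v ∨ confNE u v

theorem conformance_components_commute (X : Type) :
    -- ⊑^{C∅} ∘ ⊑^{C¬∅} = ⊑^{C¬∅} ∘ ⊑^{C∅}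
    (∀ u v : Set X, (∃ w, confNE u w ∧ confE w v) ↔ (∃ w, confE u w ∧ confNE w v)) ∧
    -- their composition equals ⊑^C
    (∀ u v : Set X, confC u v ↔ ∃ w, confNE u w ∧ confE w v) ∧
    -- consequently ⊑^C is transitive
    Transitive (@confC X) := by

  refine ⟨?_, ?_, ?_⟩
  · intro u v
    constructor
    · rintro ⟨w, hne, he⟩
      rcases he with rfl | rfl
      · rcases hne with ⟨_, h⟩ | rfl
        · exact absurd rfl h
        · exact ⟨v, Or.inl rfl, Or.inr rfl⟩
      · exact ⟨u, Or.inr rfl, hne⟩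
    · rintro ⟨w, he, hne⟩
      rcases he with rfl | rfl
      · exact ⟨(∅ : Set X), Or.inr rfl, Or.inl rfl⟩
      · exact ⟨v, hne, Or.inr rfl⟩
  · intro u v
    constructor
    · rintro (h | h)
      · exact ⟨u, Or.inr rfl, h⟩
      · exact ⟨v, h, Or.inr rfl⟩
    · rintro ⟨w, hne, he⟩
      rcases he with rfl | rfl
      · rcases hne with ⟨_, h⟩ | rfl
        · exact absurd rfl h
        · exact Or.inl (Or.inl rfl)
      · exact Or.inr hne
  · rintro u v w (huv | huv) hvw
    · rcases huv with rfl | rfl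
      · exact Or.inl (Or.inl rfl)
      · exact hvw
    · rcases huv with ⟨hsub, hne⟩ | rfl
      · rcases hvw with (rfl | rfl) | (⟨hsub', hne'⟩ | rfl)
        · exact absurd rfl hne
        · exact Or.inr (Or.inl ⟨hsub, hne⟩)
        · exact Or.inr (Or.inl ⟨hsub'.trans hsub, hne'⟩)
        · exact Or.inr (Or.inl ⟨hsub, hne⟩)
      · exact hvw
end

section
/- The conformance order ⊑ on P^A is stable: for all relations R ⊆ Z × W and functions f : X → Z, g : Y → W, if (P^A f(u), P^A g(v)) ∈ Rel_⊑(P^A)(R), then (u, v) ∈ Rel_⊑(P^A)((f × g)⁻¹(R)). -/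
theorem conformance_order_stable
    (A X Y Z W : Type) (R : Z → W → Prop) (f : X → Z) (g : Y → W)
    (u : A → Set X) (v : A → Set Y) :
    -- (P^A f(u), P^A g(v)) ∈ Rel_⊑(P^A)(R)
    (∃ (z : A → Set Z) (w : A → Set W),
        confOrdA (fun a => f '' u a) z ∧ (∀ a, relP R (z a) (w a)) ∧
          confOrdA w (fun a => g '' v a)) →
      -- (u, v) ∈ Rel_⊑(P^A)((f × g)⁻¹(R))
      ∃ (x : A → Set X) (y : A → Set Y),
        confOrdA u x ∧ (∀ a, relP (fun p q => R (f p) (g q)) (x a) (y a)) ∧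
          confOrdA y v := by
  rintro ⟨z, w, hz, hzw, hw⟩
  classical
  have key : ∀ a, u a ≠ ∅ → (∀ q ∈ v a, ∃ p ∈ u a, R (f p) (g q)) ∧ v a ≠ ∅ := by
    intro a hu
    rcases hz a with h0 | ⟨hzs, hzn⟩
    · exact absurd (Set.image_eq_empty.mp h0) hu
    rcases Set.nonempty_iff_ne_empty.mpr hzn with ⟨c, hc⟩
    obtain ⟨q0, hq0, _⟩ := (hzw a).1 c hc
    have hwne : w a ≠ ∅ := Set.nonempty_iff_ne_empty.mp ⟨q0, hq0⟩
    rcases hw a with h0 | ⟨hws, hwn⟩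
    · exact absurd h0 hwne
    constructor
    · intro q hq
      have hgq : g q ∈ w a := hws ⟨q, hq, rfl⟩
      obtain ⟨p', hp', hR⟩ := (hzw a).2 (g q) hgq
      obtain ⟨p, hp, rfl⟩ := hzs hp'
      exact ⟨p, hp, hR⟩
    · intro h
      apply hwn
      simp [h]
  refine ⟨fun a => if u a = ∅ then ∅ else {p ∈ u a | ∃ q ∈ v a, R (f p) (g q)},
          fun a => if u a = ∅ then ∅ else v a, ?_, ?_, ?_⟩
  · intro a
    by_cases h : u a = ∅
    · exact Or.inl h
    · right
      simp only [if_neg h]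
      refine ⟨fun p hp => hp.1, ?_⟩
      rcases Set.nonempty_iff_ne_empty.mpr (key a h).2 with ⟨q, hq⟩
      obtain ⟨p, hp, hR⟩ := (key a h).1 q hq
      exact Set.nonempty_iff_ne_empty.mp ⟨p, hp, q, hq, hR⟩
  · intro a
    by_cases h : u a = ∅
    · simp only [if_pos h]
      exact ⟨fun p hp => absurd hp (Set.notMem_empty p),
             fun q hq => absurd hq (Set.notMem_empty q)⟩
    · simp only [if_neg h]
      constructor
      · rintro p ⟨_, q, hq, hR⟩
        exact ⟨q, hq, hR⟩
      · intro q hq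
        obtain ⟨p, hp, hR⟩ := (key a h).1 q hq
        exact ⟨p, ⟨hp, q, hq, hR⟩, hR⟩
  · intro a
    by_cases h : u a = ∅
    · simp [h]
    · right
      simp only [if_neg h]
      exact ⟨subset_rfl, (key a h).2⟩
end
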